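/- In the three-period dynamic binary response panel model with unobserved initial condition, the U* set for outcome y = (0,1,0) equals {u ∈ ℝ³ : u₂ - u₁ ≥ -(z₂ - z₁)β + min(γ, 0) and u₃ - u₂ ≤ -(z₃ - z₂)β - γ}, where U*(y,z) = {u : ∃ y₀ ∈ {0,1}, ∃ c ∈ ℝ, ∀ t ∈ {1,2,3}, (y_t = 1 → z_tβ + y_{t-1}γ + c + u_t ≥ 0) ∧ (y_t = 0 → z_tβ + y_{t-1}γ + c + u_t ≤ 0)}. -/
import Mathlib


open scoped BigOperators

def dot {k : ℕ} (x y : Fin k → ℝ) : ℝ := ∑ i, x i * y i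

def b2r (b : Bool) : ℝ := if b then 1 else 0

/-- Lagged outcome in the three period model with unobserved initial condition. -/
def lag3 (y : Fin 3 → Bool) (y0 : Bool) (t : Fin 3) : Bool :=
  if t = 0 then y0 else if t = 1 then y 0 else y 1

/-- `U*` set in the dynamic three-period binary response panel with
unobserved initial condition. -/
def UstarDBP3 {k : ℕ} (β : Fin k → ℝ) (γ : ℝ) (z : Fin 3 → Fin k → ℝ)
    (y : Fin 3 → Bool) : Set (Fin 3 → ℝ) :=
  {u | ∃ y0 : Bool, ∃ c : ℝ, ∀ t : Fin 3,
    (y t = true → 0 ≤ dot (z t) β + b2r (lag3 y y0 t) * γ + c + u t) ∧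
    (y t = false → dot (z t) β + b2r (lag3 y y0 t) * γ + c + u t ≤ 0)}

theorem dynamic_binary_three_period_Ustar_010 {k : ℕ} (β : Fin k → ℝ) (γ : ℝ)
    (z : Fin 3 → Fin k → ℝ) :
    UstarDBP3 β γ z ![false, true, false] =
      {u | u 1 - u 0 ≥ -(dot (z 1) β - dot (z 0) β) + min γ 0 ∧
           u 2 - u 1 ≤ -(dot (z 2) β - dot (z 1) β) - γ} := by
  ext u
  simp only [UstarDBP3, Set.mem_setOf_eq]
  constructor
  · rintro ⟨y0, c, h⟩
    have h0 := (h 0).2 (by simp)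
    have h1 := (h 1).1 (by simp)
    have h2 := (h 2).2 (by simp)
    simp [lag3, b2r, Fin.ext_iff] at h0 h1 h2
    constructor
    · cases y0 <;> simp at h0
      · linarith [min_le_right γ 0]
      · linarith [min_le_left γ 0]
    · linarith
  · rintro ⟨hA, hB⟩
    by_cases hγ : γ ≤ 0
    · refine ⟨true, -(dot (z 1) β + u 1), fun t => ?_⟩
      have hm : min γ 0 = γ := min_eq_left hγ
      fin_cases t <;> simp [lag3, b2r] <;> linarith
    · refine ⟨false, -(dot (z 1) β + u 1), fun t => ?_⟩
      have hm : min γ 0 = 0 := min_eq_right (le_of_not_ge hγ)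
      fin_cases t <;> simp [lag3, b2r] <;> linarith
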